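/- arXiv:2004.04257 — 7 statements merged into one kernel-verified Lean document; each statement's English description precedes it below -/
import Mathlib

section
/- Let B = (F, Ω; H) be a finite bipartite graph and let s be a random subset of F with inclusion indicators δ_i, where π_i = P(i ∈ s) > 0 for all i ∈ F. For each edge (i,κ) ∈ H let W_{iκ} be a random weight that is zero whenever i ∉ s. If for every κ ∈ Ω we have Σ_{i ∈ β_κ} E[W_{iκ} | δ_i = 1] = 1, where β_κ = {i ∈ F : (i,κ) ∈ H}, then the incidence weighting estimator θ̂ = Σ_{(i,κ) ∈ H} δ_i W_{iκ} y_κ / π_i satisfies E[θ̂] = Σ_{κ ∈ Ω} y_κ. -/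
open Finset
open scoped Classical BigOperators

/-- Unbiasedness of the incidence weighting estimator (Proposition 1). -/
theorem stmt_0
    {F Ω Ω₀ : Type*} [Fintype F] [Fintype Ω] [Fintype Ω₀]
    (P : Ω₀ → ℝ) (hP : ∀ ω, 0 ≤ P ω) (hP1 : ∑ ω, P ω = 1)
    (s : Ω₀ → Finset F) (H : Finset (F × Ω)) (y : Ω → ℝ)
    (π : F → ℝ)
    (hπ : ∀ i, π i = ∑ ω, if i ∈ s ω then P ω else 0)
    (hπpos : ∀ i, 0 < π i)
    (W : Ω₀ → F → Ω → ℝ)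
    (hW0 : ∀ ω i κ, i ∉ s ω → W ω i κ = 0)
    (hunbias : ∀ κ : Ω,
      ∑ i ∈ univ.filter (fun i => (i, κ) ∈ H),
        (∑ ω, if i ∈ s ω then P ω * W ω i κ else 0) / π i = 1) :
    ∑ ω, P ω *
        (∑ e ∈ H, (if e.1 ∈ s ω then (1 : ℝ) else 0) * W ω e.1 e.2 * y e.2 / π e.1)
      = ∑ κ, y κ := by
  set f : F → Ω → ℝ := fun i κ =>
    (∑ ω, if i ∈ s ω then P ω * W ω i κ else 0) / π i * y κ with hf
  have step1 :
      ∑ ω, P ω *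
        (∑ e ∈ H, (if e.1 ∈ s ω then (1 : ℝ) else 0) * W ω e.1 e.2 * y e.2 / π e.1)
      = ∑ e ∈ H, f e.1 e.2 := by
    simp_rw [Finset.mul_sum]
    rw [Finset.sum_comm]
    refine Finset.sum_congr rfl fun e _ => ?_
    simp only [hf]
    rw [Finset.sum_div, Finset.sum_mul]
    refine Finset.sum_congr rfl fun ω _ => ?_
    by_cases h : e.1 ∈ s ω
    · simp only [h, if_true]; ring
    · simp [h, hW0 ω e.1 e.2 h]
  have step2 : ∑ e ∈ H, f e.1 e.2
      = ∑ κ, ∑ i ∈ univ.filter (fun i => (i, κ) ∈ H), f i κ := by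
    have : ∑ e ∈ H, f e.1 e.2
        = ∑ e : F × Ω, if e ∈ H then f e.1 e.2 else 0 := by
      rw [Finset.sum_ite_mem, Finset.univ_inter]
    rw [this, Fintype.sum_prod_type, Finset.sum_comm]
    refine Finset.sum_congr rfl fun κ _ => ?_
    rw [Finset.sum_filter]
  rw [step1, step2]
  refine Finset.sum_congr rfl fun κ _ => ?_
  simp only [hf]
  rw [← Finset.sum_mul, hunbias κ, one_mul]
end

section
/- Under the same setup, if the incidence weighting estimator θ̂ = Σ_{(i,κ) ∈ H} δ_i W_{iκ} y_κ / π_i is unbiased for θ = Σ_{κ ∈ Ω} y_κ, then its variance equals Σ_{κ ∈ Ω} Σ_{ℓ ∈ Ω} (Δ_{κℓ} − 1) y_κ y_ℓ, where Δ_{κℓ} = Σ_{i ∈ β_κ} Σ_{j ∈ β_ℓ} (π_{ij} / (π_i π_j)) E[W_{iκ} W_{jℓ} | δ_i δ_j = 1] and π_{ij} = P(δ_i δ_j = 1). -/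
open Finset
open scoped Classical BigOperators

/-! The variance of an unbiased estimator is its second moment minus `θ²`. Squaring the
estimator and taking expectations turns the second moment into a double sum over pairs of
incidences `(i, κ), (j, ℓ) ∈ H`; only samples containing both `i` and `j` contribute, which
gives `E[W_{iκ} W_{jℓ} ; δ_i δ_j = 1] / (π_i π_j) = (π_{ij} / (π_i π_j)) E[W_{iκ} W_{jℓ} | δ_i δ_j = 1]`.
Grouping the pairs by `(κ, ℓ)` yields `Σ Δ_{κℓ} y_κ y_ℓ`, and `θ² = Σ_{κ,ℓ} y_κ y_ℓ`. -/

theorem sum_mul_sub_sq_eq_of_sum_mul_eq {ι : Type*} [Fintype ι] (P X : ι → ℝ) (θ : ℝ)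
    (hP1 : ∑ ω, P ω = 1) (hmean : ∑ ω, P ω * X ω = θ) :
    ∑ ω, P ω * (X ω - θ) ^ 2 = ∑ ω, P ω * X ω ^ 2 - θ ^ 2 := by
  have expand : ∀ ω, P ω * (X ω - θ) ^ 2 = P ω * X ω ^ 2 - 2 * θ * (P ω * X ω) + θ ^ 2 * P ω :=
    fun ω => by ring
  simp only [expand, sum_add_distrib, sum_sub_distrib, ← mul_sum, hmean, hP1]
  ring

theorem sum_mul_sum_sq_eq {ι α R : Type*} [Fintype ι] [CommSemiring R] (P : ι → R)
    (H : Finset α) (a : ι → α → R) :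
    ∑ ω, P ω * (∑ e ∈ H, a ω e) ^ 2 = ∑ e ∈ H, ∑ f ∈ H, ∑ ω, P ω * (a ω e * a ω f) := by
  simp_rw [sq, sum_mul_sum, mul_sum]
  rw [sum_comm]
  exact sum_congr rfl fun e _ => sum_comm

theorem sum_sum_sub_one_mul_mul {Ω : Type*} [Fintype Ω] (D : Ω → Ω → ℝ) (y : Ω → ℝ) :
    ∑ κ, ∑ ℓ, (D κ ℓ - 1) * y κ * y ℓ = ∑ κ, ∑ ℓ, D κ ℓ * y κ * y ℓ - (∑ κ, y κ) ^ 2 := by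
  simp only [sub_mul, one_mul, sum_sub_distrib, sq, sum_mul_sum]

theorem sum_eq_sum_fiber_right {F Ω M : Type*} [Fintype F] [Fintype Ω] [AddCommMonoid M]
    (H : Finset (F × Ω)) (g : F × Ω → M) :
    ∑ e ∈ H, g e = ∑ κ, ∑ i ∈ univ.filter (fun i => (i, κ) ∈ H), g (i, κ) :=
  sum_finset_product_right H univ _ fun p => by simp

section IncidenceEstimator

variable {F Ω Ω₀ : Type*} [Fintype Ω₀] (P : Ω₀ → ℝ) (s : Ω₀ → Finset F) (y : Ω → ℝ)
  (π : F → ℝ) (W : Ω₀ → F → Ω → ℝ)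

theorem sum_mul_incidence_term_mul (i j : F) (κ ℓ : Ω) :
    ∑ ω, P ω * ((if i ∈ s ω then (1 : ℝ) else 0) * W ω i κ * y κ / π i *
        ((if j ∈ s ω then (1 : ℝ) else 0) * W ω j ℓ * y ℓ / π j))
      = (∑ ω, if i ∈ s ω ∧ j ∈ s ω then P ω * W ω i κ * W ω j ℓ else 0)
          / (π i * π j) * y κ * y ℓ := by
  rw [sum_div, sum_mul, sum_mul]
  refine sum_congr rfl fun ω _ => ?_
  by_cases hi : i ∈ s ω <;> by_cases hj : j ∈ s ω <;> simp [hi, hj]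
  ring

theorem sum_mul_incidenceEstimator_sq [Fintype F] [Fintype Ω] (H : Finset (F × Ω)) :
    ∑ ω, P ω *
        (∑ e ∈ H, (if e.1 ∈ s ω then (1 : ℝ) else 0) * W ω e.1 e.2 * y e.2 / π e.1) ^ 2
      = ∑ κ, ∑ ℓ,
          (∑ i ∈ univ.filter (fun i => (i, κ) ∈ H), ∑ j ∈ univ.filter (fun j => (j, ℓ) ∈ H),
            (∑ ω, if i ∈ s ω ∧ j ∈ s ω then P ω * W ω i κ * W ω j ℓ else 0)
              / (π i * π j)) * y κ * y ℓ := by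
  rw [sum_mul_sum_sq_eq]
  simp only [sum_mul_incidence_term_mul, sum_eq_sum_fiber_right H, sum_mul]
  exact sum_congr rfl fun κ _ => sum_comm

end IncidenceEstimator

theorem stmt_1_general
    {F Ω Ω₀ : Type*} [Fintype F] [Fintype Ω] [Fintype Ω₀]
    (P : Ω₀ → ℝ) (hP1 : ∑ ω, P ω = 1)
    (s : Ω₀ → Finset F) (H : Finset (F × Ω)) (y : Ω → ℝ)
    (π : F → ℝ)
    (πij : F → F → ℝ)
    (hπijpos : ∀ i j, 0 < πij i j)
    (W : Ω₀ → F → Ω → ℝ)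
    (hunb : ∑ ω, P ω *
        (∑ e ∈ H, (if e.1 ∈ s ω then (1 : ℝ) else 0) * W ω e.1 e.2 * y e.2 / π e.1)
      = ∑ κ, y κ) :
    ∑ ω, P ω *
        ((∑ e ∈ H, (if e.1 ∈ s ω then (1 : ℝ) else 0) * W ω e.1 e.2 * y e.2 / π e.1)
          - ∑ κ, y κ) ^ 2
      = ∑ κ, ∑ ℓ,
          ((∑ i ∈ univ.filter (fun i => (i, κ) ∈ H),
              ∑ j ∈ univ.filter (fun j => (j, ℓ) ∈ H),
                (πij i j / (π i * π j)) *
                  ((∑ ω, if i ∈ s ω ∧ j ∈ s ω then P ω * W ω i κ * W ω j ℓ else 0)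
                    / πij i j)) - 1) * y κ * y ℓ := by
  rw [sum_mul_sub_sq_eq_of_sum_mul_eq P _ _ hP1 hunb, sum_sum_sub_one_mul_mul,
    sum_mul_incidenceEstimator_sq]
  simp only [div_mul_div_cancel₀' (hπijpos _ _).ne']

/-- Variance of an unbiased incidence weighting estimator (Proposition 2). -/
theorem stmt_1
    {F Ω Ω₀ : Type*} [Fintype F] [Fintype Ω] [Fintype Ω₀]
    (P : Ω₀ → ℝ) (hP : ∀ ω, 0 ≤ P ω) (hP1 : ∑ ω, P ω = 1)
    (s : Ω₀ → Finset F) (H : Finset (F × Ω)) (y : Ω → ℝ)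
    (π : F → ℝ)
    (hπ : ∀ i, π i = ∑ ω, if i ∈ s ω then P ω else 0)
    (hπpos : ∀ i, 0 < π i)
    (πij : F → F → ℝ)
    (hπij : ∀ i j, πij i j = ∑ ω, if i ∈ s ω ∧ j ∈ s ω then P ω else 0)
    (hπijpos : ∀ i j, 0 < πij i j)
    (W : Ω₀ → F → Ω → ℝ)
    (hW0 : ∀ ω i κ, i ∉ s ω → W ω i κ = 0)
    (hunbias : ∀ κ : Ω,
      ∑ i ∈ univ.filter (fun i => (i, κ) ∈ H),
        (∑ ω, if i ∈ s ω then P ω * W ω i κ else 0) / π i = 1)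
    (hunb : ∑ ω, P ω *
        (∑ e ∈ H, (if e.1 ∈ s ω then (1 : ℝ) else 0) * W ω e.1 e.2 * y e.2 / π e.1)
      = ∑ κ, y κ) :
    ∑ ω, P ω *
        ((∑ e ∈ H, (if e.1 ∈ s ω then (1 : ℝ) else 0) * W ω e.1 e.2 * y e.2 / π e.1)
          - ∑ κ, y κ) ^ 2
      = ∑ κ, ∑ ℓ,
          ((∑ i ∈ univ.filter (fun i => (i, κ) ∈ H),
              ∑ j ∈ univ.filter (fun j => (j, ℓ) ∈ H),
                (πij i j / (π i * π j)) *
                  ((∑ ω, if i ∈ s ω ∧ j ∈ s ω then P ω * W ω i κ * W ω j ℓ else 0)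
                    / πij i j)) - 1) * y κ * y ℓ :=
  stmt_1_general P hP1 s H y π πij hπijpos W hunb
end

section
/- Suppose for each κ ∈ Ω and each realized sample intersection s_κ = s ∩ β_κ ≠ ∅ the random weights satisfy Σ_{i ∈ s_κ} W_{iκ}/π_i = 1/π_{(κ)}, where π_{(κ)} = P(β_κ ∩ s ≠ ∅) > 0, and W_{iκ} depends on s only through s_κ. Then the weights satisfy the unbiasedness condition Σ_{i ∈ β_κ} E[W_{iκ} | δ_i = 1] = 1 for every κ ∈ Ω, and consequently the incidence weighting estimator equals the Horvitz-Thompson estimator θ̂_y = Σ_{κ ∈ Ω_s} y_κ/π_{(κ)} and is unbiased for θ. -/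
open Finset
open scoped Classical BigOperators

/-- Weights satisfying the HT condition satisfy the unbiasedness condition, and
the incidence weighting estimator equals the Horvitz-Thompson estimator and is
unbiased. -/
theorem stmt_6
    {F Ω Ω₀ : Type*} [Fintype F] [Fintype Ω] [Fintype Ω₀]
    (P : Ω₀ → ℝ) (hP : ∀ ω, 0 ≤ P ω) (hP1 : ∑ ω, P ω = 1)
    (s : Ω₀ → Finset F) (H : Finset (F × Ω)) (y : Ω → ℝ)
    (π : F → ℝ)
    (hπ : ∀ i, π i = ∑ ω, if i ∈ s ω then P ω else 0)
    (hπpos : ∀ i, 0 < π i)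
    (πκ : Ω → ℝ)
    (hπκ : ∀ κ, πκ κ =
      ∑ ω, if (s ω ∩ univ.filter (fun i => (i, κ) ∈ H)).Nonempty then P ω else 0)
    (hπκpos : ∀ κ, 0 < πκ κ)
    (W : Ω₀ → F → Ω → ℝ)
    (hW0 : ∀ ω i κ, i ∉ s ω → W ω i κ = 0)
    (hdep : ∀ (κ : Ω) (i : F) (ω ω' : Ω₀),
      s ω ∩ univ.filter (fun i => (i, κ) ∈ H) = s ω' ∩ univ.filter (fun i => (i, κ) ∈ H) →
      W ω i κ = W ω' i κ)
    (hHT : ∀ (κ : Ω) (ω : Ω₀),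
      (s ω ∩ univ.filter (fun i => (i, κ) ∈ H)).Nonempty →
      ∑ i ∈ s ω ∩ univ.filter (fun i => (i, κ) ∈ H), W ω i κ / π i = 1 / πκ κ) :
    (∀ κ : Ω,
      ∑ i ∈ univ.filter (fun i => (i, κ) ∈ H),
        (∑ ω, if i ∈ s ω then P ω * W ω i κ else 0) / π i = 1)
    ∧ (∀ ω : Ω₀,
        (∑ e ∈ H, (if e.1 ∈ s ω then (1 : ℝ) else 0) * W ω e.1 e.2 * y e.2 / π e.1)
        = ∑ κ ∈ univ.filter
            (fun κ : Ω => (s ω ∩ univ.filter (fun i => (i, κ) ∈ H)).Nonempty),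
            y κ / πκ κ)
    ∧ (∑ ω, P ω *
        (∑ e ∈ H, (if e.1 ∈ s ω then (1 : ℝ) else 0) * W ω e.1 e.2 * y e.2 / π e.1)
      = ∑ κ, y κ) := by
  classical
  set β : Ω → Finset F := fun κ => univ.filter (fun i => (i, κ) ∈ H) with hβ
  have key : ∀ (κ : Ω) (ω : Ω₀),
      (∑ i ∈ β κ, if i ∈ s ω then W ω i κ / π i else 0)
        = if (s ω ∩ β κ).Nonempty then 1 / πκ κ else 0 := by
    intro κ ω
    have h2 : (β κ).filter (fun i => i ∈ s ω) = s ω ∩ β κ := by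
      ext i; simp [hβ, and_comm]
    rw [← Finset.sum_filter, h2]
    by_cases hne : (s ω ∩ β κ).Nonempty
    · rw [if_pos hne, hHT κ ω hne]
    · rw [if_neg hne, Finset.not_nonempty_iff_eq_empty.mp hne, Finset.sum_empty]
  have key1 : ∀ κ : Ω, ∑ i ∈ β κ,
      (∑ ω, if i ∈ s ω then P ω * W ω i κ else 0) / π i = 1 := by
    intro κ
    have e1 : ∀ i ∈ β κ, (∑ ω, if i ∈ s ω then P ω * W ω i κ else 0) / π i
        = ∑ ω, P ω * (if i ∈ s ω then W ω i κ / π i else 0) := by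
      intro i _
      rw [Finset.sum_div]
      refine Finset.sum_congr rfl fun ω _ => ?_
      by_cases h : i ∈ s ω <;> simp [h, mul_div_assoc]
    rw [Finset.sum_congr rfl e1, Finset.sum_comm]
    have e2 : ∀ ω : Ω₀, (∑ i ∈ β κ, P ω * (if i ∈ s ω then W ω i κ / π i else 0))
        = if (s ω ∩ β κ).Nonempty then P ω / πκ κ else 0 := by
      intro ω
      rw [← Finset.mul_sum, key κ ω]
      by_cases h : (s ω ∩ β κ).Nonempty <;> simp [h, mul_one_div, div_eq_mul_inv]
    rw [Finset.sum_congr rfl (fun ω _ => e2 ω)]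
    have hsum : (∑ ω, if (s ω ∩ β κ).Nonempty then P ω / πκ κ else 0)
        = (∑ ω, if (s ω ∩ β κ).Nonempty then P ω else 0) / πκ κ := by
      rw [Finset.sum_div]
      exact Finset.sum_congr rfl fun ω _ => by split <;> simp
    rw [hsum, ← hπκ κ, div_self (hπκpos κ).ne']
  have key2 : ∀ ω : Ω₀,
      (∑ e ∈ H, (if e.1 ∈ s ω then (1 : ℝ) else 0) * W ω e.1 e.2 * y e.2 / π e.1)
        = ∑ κ ∈ univ.filter (fun κ : Ω => (s ω ∩ β κ).Nonempty), y κ / πκ κ := by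
    intro ω
    rw [Finset.sum_finset_product_right H univ (fun κ => β κ)
      (by intro p; simp [hβ])]
    have e1 : ∀ κ : Ω, (∑ i ∈ β κ,
        (if i ∈ s ω then (1 : ℝ) else 0) * W ω i κ * y κ / π i)
        = if (s ω ∩ β κ).Nonempty then y κ / πκ κ else 0 := by
      intro κ
      have : ∀ i ∈ β κ, (if i ∈ s ω then (1 : ℝ) else 0) * W ω i κ * y κ / π i
          = y κ * (if i ∈ s ω then W ω i κ / π i else 0) := by
        intro i _
        by_cases h : i ∈ s ω <;> simp [h] <;> ring
      rw [Finset.sum_congr rfl this, ← Finset.mul_sum, key κ ω]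
      by_cases h : (s ω ∩ β κ).Nonempty <;> simp [h, mul_one_div, div_eq_mul_inv]
    rw [Finset.sum_congr rfl (fun κ _ => e1 κ), Finset.sum_filter]
  refine ⟨key1, key2, ?_⟩
  have e3 : ∀ ω : Ω₀, P ω *
      (∑ e ∈ H, (if e.1 ∈ s ω then (1 : ℝ) else 0) * W ω e.1 e.2 * y e.2 / π e.1)
      = ∑ κ : Ω, if (s ω ∩ β κ).Nonempty then P ω * (y κ / πκ κ) else 0 := by
    intro ω
    rw [key2 ω, Finset.sum_filter, Finset.mul_sum]
    exact Finset.sum_congr rfl fun κ _ => by split <;> simp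
  rw [Finset.sum_congr rfl (fun ω _ => e3 ω), Finset.sum_comm]
  refine Finset.sum_congr rfl fun κ _ => ?_
  have : (∑ ω, if (s ω ∩ β κ).Nonempty then P ω * (y κ / πκ κ) else 0)
      = (∑ ω, if (s ω ∩ β κ).Nonempty then P ω else 0) * (y κ / πκ κ) := by
    rw [Finset.sum_mul]
    exact Finset.sum_congr rfl fun ω _ => by split <;> simp
  rw [this, ← hπκ κ]
  rw [mul_comm, div_mul_cancel₀ _ (hπκpos κ).ne']
end

section
/- More generally, let η_{s_κ} = π_{(κ)} Σ_{i ∈ s_κ} W_{iκ}/π_i for each nonempty intersection s_κ = s ∩ β_κ, where W_{iκ} depends on s only through s_κ. Then the unbiasedness condition Σ_{i ∈ β_κ} E[W_{iκ} | δ_i = 1] = 1 holds for κ if and only if Σ_{s_κ ≠ ∅} φ_{s_κ} η_{s_κ} = π_{(κ)}, where φ_{s_κ} = P(s ∩ β_κ = s_κ). -/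
open Finset
open scoped Classical BigOperators

/-- General characterisation of unbiasedness for weights depending on the
sample intersection only: the unbiasedness condition holds iff
`∑_{s_κ} φ_{s_κ} η_{s_κ} = π_{(κ)}`. -/
theorem stmt_7
    {F Ω Ω₀ : Type*} [Fintype F] [Fintype Ω] [Fintype Ω₀]
    (P : Ω₀ → ℝ) (hP : ∀ ω, 0 ≤ P ω) (hP1 : ∑ ω, P ω = 1)
    (s : Ω₀ → Finset F) (H : Finset (F × Ω))
    (π : F → ℝ)
    (hπ : ∀ i, π i = ∑ ω, if i ∈ s ω then P ω else 0)
    (hπpos : ∀ i, 0 < π i)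
    (πκ : Ω → ℝ)
    (hπκ : ∀ κ, πκ κ =
      ∑ ω, if (s ω ∩ univ.filter (fun i => (i, κ) ∈ H)).Nonempty then P ω else 0)
    (hπκpos : ∀ κ, 0 < πκ κ)
    (w : Ω → Finset F → F → ℝ)
    (hw0 : ∀ (κ : Ω) (t : Finset F) (i : F), i ∉ t → w κ t i = 0) :
    ∀ κ : Ω,
      (∑ i ∈ univ.filter (fun i => (i, κ) ∈ H),
          (∑ ω, if i ∈ s ω then
              P ω * w κ (s ω ∩ univ.filter (fun i => (i, κ) ∈ H)) i else 0) / π i = 1)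
      ↔ (∑ t ∈ (univ.filter (fun i => (i, κ) ∈ H)).powerset.filter
            (fun t => t.Nonempty),
            (∑ ω, if s ω ∩ univ.filter (fun i => (i, κ) ∈ H) = t then P ω else 0) *
              (πκ κ * ∑ i ∈ t, w κ t i / π i)
          = πκ κ) := by
  intro κ
  set β : Finset F := univ.filter (fun i => (i, κ) ∈ H) with hβ
  have hκne : πκ κ ≠ 0 := (hπκpos κ).ne'
  have key : (∑ t ∈ β.powerset.filter (fun t => t.Nonempty),
        (∑ ω, if s ω ∩ β = t then P ω else 0) * (πκ κ * ∑ i ∈ t, w κ t i / π i))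
      = πκ κ * ∑ i ∈ β, (∑ ω, if i ∈ s ω then P ω * w κ (s ω ∩ β) i else 0) / π i := by
    have lhs_eq : (∑ t ∈ β.powerset.filter (fun t => t.Nonempty),
          (∑ ω, if s ω ∩ β = t then P ω else 0) * (πκ κ * ∑ i ∈ t, w κ t i / π i))
        = ∑ ω, P ω * (πκ κ * ∑ i ∈ s ω ∩ β, w κ (s ω ∩ β) i / π i) := by
      simp_rw [Finset.sum_mul]
      rw [Finset.sum_comm]
      refine Finset.sum_congr rfl fun ω _ => ?_
      simp_rw [ite_mul, zero_mul]
      rw [Finset.sum_ite_eq]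
      by_cases hne : (s ω ∩ β).Nonempty
      · rw [if_pos]
        simp [hne, Finset.inter_subset_right]
      · rw [Finset.not_nonempty_iff_eq_empty] at hne
        simp [hne]
    have rhs_eq : (πκ κ * ∑ i ∈ β, (∑ ω, if i ∈ s ω then P ω * w κ (s ω ∩ β) i else 0) / π i)
        = ∑ ω, P ω * (πκ κ * ∑ i ∈ s ω ∩ β, w κ (s ω ∩ β) i / π i) := by
      have h1 : ∀ ω, (∑ i ∈ s ω ∩ β, w κ (s ω ∩ β) i / π i)
          = ∑ i ∈ β, if i ∈ s ω then w κ (s ω ∩ β) i / π i else 0 := by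
        intro ω
        rw [show s ω ∩ β = β.filter (fun i => i ∈ s ω) from by ext i; simp [and_comm],
          Finset.sum_filter]
      simp_rw [h1, Finset.mul_sum, Finset.sum_div]
      rw [Finset.sum_comm]
      refine Finset.sum_congr rfl fun ω _ => ?_
      rw [Finset.mul_sum]
      refine Finset.sum_congr rfl fun i _ => ?_
      by_cases hi : ω ∈ s i <;> simp [hi] <;> ring
    rw [lhs_eq, rhs_eq]
  rw [key]
  constructor
  · intro h; rw [h, mul_one]
  · intro h
    exact mul_left_cancel₀ hκne (by rw [h, mul_one])
end

section
/- Under the conditions of the unbiased priority-rule estimator, its variance equals Σ_{(i,κ) ∈ H} Σ_{(j,ℓ) ∈ H} (π_{ij} p_{iκ,jℓ} / (π_i π_j p_{iκ} p_{jℓ}) − 1) ω_{iκ} ω_{jℓ} y_κ y_ℓ, where p_{iκ,jℓ} = P(I_{iκ} I_{jℓ} = 1 | δ_i δ_j = 1) and π_{ij} = P(δ_i δ_j = 1). -/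
open Finset
open scoped Classical BigOperators

/-- Variance of the (unbiased) priority-rule estimator. -/
theorem stmt_9
    {F Ω Ω₀ : Type*} [Fintype F] [Fintype Ω] [Fintype Ω₀]
    (P : Ω₀ → ℝ) (hP : ∀ ω, 0 ≤ P ω) (hP1 : ∑ ω, P ω = 1)
    (s : Ω₀ → Finset F) (H : Finset (F × Ω)) (y : Ω → ℝ)
    (π : F → ℝ)
    (hπ : ∀ i, π i = ∑ ω, if i ∈ s ω then P ω else 0)
    (hπpos : ∀ i, 0 < π i)
    (πij : F → F → ℝ)
    (hπij : ∀ i j, πij i j = ∑ ω, if i ∈ s ω ∧ j ∈ s ω then P ω else 0)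
    (hπijpos : ∀ i j, 0 < πij i j)
    (I : Ω₀ → F → Ω → ℝ)
    (hI01 : ∀ ω i κ, I ω i κ = 0 ∨ I ω i κ = 1)
    (hI0 : ∀ ω i κ, i ∉ s ω → I ω i κ = 0)
    (p : F → Ω → ℝ)
    (hp : ∀ i κ, p i κ = (∑ ω, if i ∈ s ω then P ω * I ω i κ else 0) / π i)
    (hppos : ∀ e ∈ H, 0 < p e.1 e.2)
    (w : F → Ω → ℝ)
    (hw : ∀ κ : Ω, ∑ i ∈ univ.filter (fun i => (i, κ) ∈ H), w i κ = 1) :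
    ∑ ω, P ω *
        ((∑ e ∈ H, (if e.1 ∈ s ω then (1 : ℝ) else 0) * I ω e.1 e.2 * w e.1 e.2 *
            y e.2 / (p e.1 e.2 * π e.1)) - ∑ κ, y κ) ^ 2
      = ∑ e ∈ H, ∑ f ∈ H,
          (πij e.1 f.1 *
              ((∑ ω, if e.1 ∈ s ω ∧ f.1 ∈ s ω then
                  P ω * I ω e.1 e.2 * I ω f.1 f.2 else 0) / πij e.1 f.1)
            / (π e.1 * π f.1 * p e.1 e.2 * p f.1 f.2) - 1)
          * w e.1 e.2 * w f.1 f.2 * y e.2 * y f.2 := by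
  classical
  have hπne : ∀ i, π i ≠ 0 := fun i => (hπpos i).ne'
  have hkey : ∀ i κ, (∑ ω, if i ∈ s ω then P ω * I ω i κ else 0) = p i κ * π i := by
    intro i κ
    rw [hp i κ, div_mul_cancel₀ _ (hπne i)]
  -- abbreviation for the per-sample summand
  set A : Ω₀ → F × Ω → ℝ := fun ω e =>
    (if e.1 ∈ s ω then (1 : ℝ) else 0) * I ω e.1 e.2 * w e.1 e.2 * y e.2 /
      (p e.1 e.2 * π e.1) with hA
  set Y : ℝ := ∑ κ, y κ with hYdef
  -- sum of weights times y over H equals Y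
  have hwy : ∑ e ∈ H, w e.1 e.2 * y e.2 = Y := by
    have h1 : ∑ e ∈ H, w e.1 e.2 * y e.2
        = ∑ e : F × Ω, if e ∈ H then w e.1 e.2 * y e.2 else 0 := by
      rw [Finset.sum_ite_mem, Finset.univ_inter]
    rw [h1, Fintype.sum_prod_type, Finset.sum_comm, hYdef]
    refine Finset.sum_congr rfl fun κ _ => ?_
    have h2 : ∑ i : F, (if (i, κ) ∈ H then w i κ * y κ else 0)
        = (∑ i ∈ univ.filter (fun i => (i, κ) ∈ H), w i κ) * y κ := by
      rw [Finset.sum_filter, Finset.sum_mul]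
      refine Finset.sum_congr rfl fun i _ => ?_
      split_ifs <;> ring
    rw [h2, hw κ, one_mul]
  -- expectation of each summand
  have hEa : ∀ e ∈ H, ∑ ω, P ω * A ω e = w e.1 e.2 * y e.2 := by
    intro e he
    have hpne : p e.1 e.2 ≠ 0 := (hppos e he).ne'
    have h1 : ∑ ω, P ω * A ω e
        = (∑ ω, if e.1 ∈ s ω then P ω * I ω e.1 e.2 else 0) *
            (w e.1 e.2 * y e.2 / (p e.1 e.2 * π e.1)) := by
      rw [Finset.sum_mul]
      refine Finset.sum_congr rfl fun ω _ => ?_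
      simp only [hA]
      split_ifs <;> ring
    rw [h1, hkey]
    rw [← mul_div_assoc]
    exact mul_div_cancel_left₀ _ (mul_ne_zero hpne (hπne e.1))
  -- unbiasedness
  have hmean : ∑ ω, P ω * (∑ e ∈ H, A ω e) = Y := by
    calc ∑ ω, P ω * (∑ e ∈ H, A ω e) = ∑ ω, ∑ e ∈ H, P ω * A ω e := by
          simp [Finset.mul_sum]
      _ = ∑ e ∈ H, ∑ ω, P ω * A ω e := Finset.sum_comm
      _ = ∑ e ∈ H, w e.1 e.2 * y e.2 := Finset.sum_congr rfl hEa
      _ = Y := hwy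
  -- second moments
  have hsec : ∀ e ∈ H, ∀ f ∈ H, ∑ ω, P ω * A ω e * A ω f
      = (∑ ω, if e.1 ∈ s ω ∧ f.1 ∈ s ω then P ω * I ω e.1 e.2 * I ω f.1 f.2 else 0)
          / (π e.1 * π f.1 * p e.1 e.2 * p f.1 f.2)
          * w e.1 e.2 * w f.1 f.2 * y e.2 * y f.2 := by
    intro e he f hf
    rw [Finset.sum_div, Finset.sum_mul, Finset.sum_mul, Finset.sum_mul, Finset.sum_mul]
    refine Finset.sum_congr rfl fun ω _ => ?_
    simp only [hA]
    by_cases h1 : e.1 ∈ s ω <;> by_cases h2 : f.1 ∈ s ω <;>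
      simp only [h1, h2, if_true, if_false, and_true, and_false, true_and, false_and,
        if_pos, and_self] <;> ring
  -- rewrite the goal
  have hRHS : ∀ e ∈ H, ∀ f ∈ H,
      (πij e.1 f.1 *
          ((∑ ω, if e.1 ∈ s ω ∧ f.1 ∈ s ω then
              P ω * I ω e.1 e.2 * I ω f.1 f.2 else 0) / πij e.1 f.1)
        / (π e.1 * π f.1 * p e.1 e.2 * p f.1 f.2) - 1)
      * w e.1 e.2 * w f.1 f.2 * y e.2 * y f.2
      = (∑ ω, P ω * A ω e * A ω f) - w e.1 e.2 * w f.1 f.2 * y e.2 * y f.2 := by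
    intro e he f hf
    rw [mul_div_cancel₀ _ (hπijpos e.1 f.1).ne', hsec e he f hf]
    ring
  have hsum2 : ∑ e ∈ H, ∑ f ∈ H, w e.1 e.2 * w f.1 f.2 * y e.2 * y f.2 = Y * Y := by
    rw [← hwy, Finset.sum_mul_sum]
    refine Finset.sum_congr rfl fun e _ => Finset.sum_congr rfl fun f _ => by ring
  have hM : ∑ ω, P ω * (∑ e ∈ H, A ω e) ^ 2
      = ∑ e ∈ H, ∑ f ∈ H, ∑ ω, P ω * A ω e * A ω f := by
    calc ∑ ω, P ω * (∑ e ∈ H, A ω e) ^ 2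
        = ∑ ω, ∑ e ∈ H, ∑ f ∈ H, P ω * A ω e * A ω f := by
          refine Finset.sum_congr rfl fun ω _ => ?_
          rw [sq, Finset.sum_mul_sum, Finset.mul_sum]
          refine Finset.sum_congr rfl fun e _ => ?_
          rw [Finset.mul_sum]
          refine Finset.sum_congr rfl fun f _ => by ring
      _ = ∑ e ∈ H, ∑ ω, ∑ f ∈ H, P ω * A ω e * A ω f := Finset.sum_comm
      _ = ∑ e ∈ H, ∑ f ∈ H, ∑ ω, P ω * A ω e * A ω f :=
          Finset.sum_congr rfl fun e _ => Finset.sum_comm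
  -- expand the square on the LHS
  have hLHS : ∑ ω, P ω * ((∑ e ∈ H, A ω e) - Y) ^ 2
      = ∑ ω, P ω * (∑ e ∈ H, A ω e) ^ 2 - Y * Y := by
    have hexp : ∀ ω, P ω * ((∑ e ∈ H, A ω e) - Y) ^ 2
        = P ω * (∑ e ∈ H, A ω e) ^ 2
          - 2 * Y * (P ω * (∑ e ∈ H, A ω e)) + Y ^ 2 * P ω := fun ω => by ring
    calc ∑ ω, P ω * ((∑ e ∈ H, A ω e) - Y) ^ 2
        = ∑ ω, (P ω * (∑ e ∈ H, A ω e) ^ 2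
            - 2 * Y * (P ω * (∑ e ∈ H, A ω e)) + Y ^ 2 * P ω) :=
          Finset.sum_congr rfl fun ω _ => hexp ω
      _ = (∑ ω, P ω * (∑ e ∈ H, A ω e) ^ 2)
            - 2 * Y * (∑ ω, P ω * (∑ e ∈ H, A ω e)) + Y ^ 2 * (∑ ω, P ω) := by
          rw [Finset.sum_add_distrib, Finset.sum_sub_distrib, ← Finset.mul_sum,
            ← Finset.mul_sum]
      _ = ∑ ω, P ω * (∑ e ∈ H, A ω e) ^ 2 - Y * Y := by
          rw [hmean, hP1]; ring
  calc ∑ ω, P ω * ((∑ e ∈ H, A ω e) - Y) ^ 2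
      = ∑ ω, P ω * (∑ e ∈ H, A ω e) ^ 2 - Y * Y := hLHS
    _ = (∑ e ∈ H, ∑ f ∈ H, ∑ ω, P ω * A ω e * A ω f)
          - ∑ e ∈ H, ∑ f ∈ H, w e.1 e.2 * w f.1 f.2 * y e.2 * y f.2 := by
        rw [hM, hsum2]
    _ = ∑ e ∈ H, ∑ f ∈ H,
          ((∑ ω, P ω * A ω e * A ω f) - w e.1 e.2 * w f.1 f.2 * y e.2 * y f.2) := by
        rw [← Finset.sum_sub_distrib]
        refine Finset.sum_congr rfl fun e _ => ?_
        rw [← Finset.sum_sub_distrib]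
    _ = _ := Finset.sum_congr rfl fun e he => Finset.sum_congr rfl fun f hf =>
        (hRHS e he f hf).symm
end

section
/- In the same single-draw setting with |α_i| = 1, for any constant weights ω_{iκ} ≥ 0 with Σ_{i ∈ β_κ} ω_{iκ} = 1, conditional on the event that motif κ is observed (i.e., the drawn unit lies in β_κ), the estimator z_i/p_i = ω_{iκ} y_κ / p_i has conditional expectation y_κ / p_{(κ)}; its conditional variance is zero if and only if ω_{iκ}/p_i is constant over i ∈ β_κ (equivalently ω_{iκ} = p_i/p_{(κ)}), assuming y_κ ≠ 0 and |β_κ| ≥ 2. -/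
open Finset
open scoped Classical BigOperators

theorem Finset.sum_mul_sq_sub_eq_zero_iff {ι : Type*} {s : Finset ι} {q x : ι → ℝ} {c : ℝ}
    (hq : ∀ i ∈ s, 0 < q i) :
    ∑ i ∈ s, q i * (x i - c) ^ 2 = 0 ↔ ∀ i ∈ s, x i = c := by
  rw [sum_eq_zero_iff_of_nonneg fun i hi => mul_nonneg (hq i hi).le (sq_nonneg _)]
  refine forall₂_congr fun i hi => ?_
  rw [mul_eq_zero, or_iff_right (hq i hi).ne', sq_eq_zero_iff, sub_eq_zero]

theorem mul_div_eq_div_iff_eq_div {w y p P : ℝ} (hy : y ≠ 0) (hp : p ≠ 0) (hP : P ≠ 0) :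
    w * y / p = y / P ↔ w = p / P := by
  rw [div_eq_div_iff hp hP, eq_div_iff hP, mul_right_comm, mul_comm y p, mul_left_inj' hy]

theorem div_mul_mul_div_cancel {q w y P : ℝ} (hq : q ≠ 0) :
    q / P * (w * y / q) = w * (y / P) := by
  field_simp

theorem stmt_13_general
    {F : Type*}
    (β : Finset F)
    (p : F → ℝ) (hp : ∀ i, 0 < p i)
    (pκ : ℝ) (hpκ : pκ = ∑ i ∈ β, p i)
    (w : F → ℝ) (hw1 : ∑ i ∈ β, w i = 1)
    (yκ : ℝ) (hy : yκ ≠ 0) :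
    (∑ i ∈ β, (p i / pκ) * (w i * yκ / p i) = yκ / pκ)
    ∧ ((∑ i ∈ β, (p i / pκ) * (w i * yκ / p i - yκ / pκ) ^ 2 = 0)
        ↔ ∀ i ∈ β, w i = p i / pκ) := by
  have hβ : β.Nonempty := nonempty_of_sum_ne_zero (hw1 ▸ one_ne_zero)
  have hpκpos : 0 < pκ := hpκ ▸ sum_pos (fun i _ => hp i) hβ
  refine ⟨?_, ?_⟩
  · simp_rw [div_mul_mul_div_cancel (hp _).ne', ← sum_mul, hw1, one_mul]
  · rw [sum_mul_sq_sub_eq_zero_iff fun i _ => div_pos (hp i) hpκpos]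
    exact forall₂_congr fun i _ => mul_div_eq_div_iff_eq_div hy (hp i).ne' hpκpos.ne'

/-- Single-draw setting: conditional on observing motif `κ`, the HH-type
estimator has conditional expectation `y_κ / p_{(κ)}`, and its conditional
variance is zero iff the weights are `ω_{iκ} = p_i / p_{(κ)}`. -/
theorem stmt_13
    {F : Type*} [Fintype F]
    (β : Finset F) (hβcard : 2 ≤ β.card)
    (p : F → ℝ) (hp : ∀ i, 0 < p i) (hp1 : ∑ i, p i = 1)
    (pκ : ℝ) (hpκ : pκ = ∑ i ∈ β, p i)
    (w : F → ℝ) (hw0 : ∀ i ∈ β, 0 ≤ w i) (hw1 : ∑ i ∈ β, w i = 1)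
    (yκ : ℝ) (hy : yκ ≠ 0) :
    (∑ i ∈ β, (p i / pκ) * (w i * yκ / p i) = yκ / pκ)
    ∧ ((∑ i ∈ β, (p i / pκ) * (w i * yκ / p i - yκ / pκ) ^ 2 = 0)
        ↔ ∀ i ∈ β, w i = p i / pκ) :=
  stmt_13_general β p hp pκ hpκ w hw1 yκ hy
end

section
/- For an unbiased incidence weighting estimator with weights satisfying the HT condition Σ_{i ∈ s_κ} W_{iκ}/π_i = 1/π_{(κ)} for all nonempty s_κ = s ∩ β_κ (with W_{iκ} functions of s_κ only), the quantity Δ_{κℓ} = Σ_{i ∈ β_κ} Σ_{j ∈ β_ℓ} (π_{ij}/(π_i π_j)) E[W_{iκ}W_{jℓ} | δ_iδ_j = 1] reduces to π_{(κℓ)}/(π_{(κ)}π_{(ℓ)}), where π_{(κℓ)} = P(κ ∈ Ω_s and ℓ ∈ Ω_s); hence the variance formula recovers the standard Horvitz-Thompson variance Σ_κ Σ_ℓ (π_{(κℓ)}/(π_{(κ)}π_{(ℓ)}) − 1) y_κ y_ℓ. -/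
open Finset
open scoped Classical BigOperators

/-- For weights satisfying the HT condition, `Δ_{κℓ}` reduces to
`π_{(κℓ)}/(π_{(κ)}π_{(ℓ)})` and the variance formula recovers the standard
Horvitz-Thompson variance. -/
theorem stmt_17
    {F Ω Ω₀ : Type*} [Fintype F] [Fintype Ω] [Fintype Ω₀]
    (P : Ω₀ → ℝ) (hP : ∀ ω, 0 ≤ P ω) (hP1 : ∑ ω, P ω = 1)
    (s : Ω₀ → Finset F) (H : Finset (F × Ω)) (y : Ω → ℝ)
    (π : F → ℝ)
    (hπ : ∀ i, π i = ∑ ω, if i ∈ s ω then P ω else 0)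
    (hπpos : ∀ i, 0 < π i)
    (πij : F → F → ℝ)
    (hπij : ∀ i j, πij i j = ∑ ω, if i ∈ s ω ∧ j ∈ s ω then P ω else 0)
    (hπijpos : ∀ i j, 0 < πij i j)
    (πκ : Ω → ℝ)
    (hπκ : ∀ κ, πκ κ =
      ∑ ω, if (s ω ∩ univ.filter (fun i => (i, κ) ∈ H)).Nonempty then P ω else 0)
    (hπκpos : ∀ κ, 0 < πκ κ)
    (πκℓ : Ω → Ω → ℝ)
    (hπκℓ : ∀ κ ℓ, πκℓ κ ℓ =
      ∑ ω, if (s ω ∩ univ.filter (fun i => (i, κ) ∈ H)).Nonempty ∧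
            (s ω ∩ univ.filter (fun i => (i, ℓ) ∈ H)).Nonempty then P ω else 0)
    (W : Ω₀ → F → Ω → ℝ)
    (hW0 : ∀ ω i κ, i ∉ s ω → W ω i κ = 0)
    (hdep : ∀ (κ : Ω) (i : F) (ω ω' : Ω₀),
      s ω ∩ univ.filter (fun i => (i, κ) ∈ H) = s ω' ∩ univ.filter (fun i => (i, κ) ∈ H) →
      W ω i κ = W ω' i κ)
    (hHT : ∀ (κ : Ω) (ω : Ω₀),
      (s ω ∩ univ.filter (fun i => (i, κ) ∈ H)).Nonempty →
      ∑ i ∈ s ω ∩ univ.filter (fun i => (i, κ) ∈ H), W ω i κ / π i = 1 / πκ κ) :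
    (∀ κ ℓ : Ω,
      ∑ i ∈ univ.filter (fun i => (i, κ) ∈ H),
        ∑ j ∈ univ.filter (fun j => (j, ℓ) ∈ H),
          (πij i j / (π i * π j)) *
            ((∑ ω, if i ∈ s ω ∧ j ∈ s ω then P ω * W ω i κ * W ω j ℓ else 0)
              / πij i j)
        = πκℓ κ ℓ / (πκ κ * πκ ℓ))
    ∧ (∑ ω, P ω *
        ((∑ e ∈ H, (if e.1 ∈ s ω then (1 : ℝ) else 0) * W ω e.1 e.2 * y e.2 / π e.1)
          - ∑ κ, y κ) ^ 2
      = ∑ κ, ∑ ℓ, (πκℓ κ ℓ / (πκ κ * πκ ℓ) - 1) * y κ * y ℓ) := by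

  have hπκne : ∀ κ, πκ κ ≠ 0 := fun κ => ne_of_gt (hπκpos κ)
  have hπne : ∀ i, π i ≠ 0 := fun i => ne_of_gt (hπpos i)
  set β : Ω → Finset F := fun κ => univ.filter (fun i => (i, κ) ∈ H) with hβ
  set g : Ω → Ω₀ → ℝ := fun κ ω => if (s ω ∩ β κ).Nonempty then 1 / πκ κ else 0 with hg
  have key : ∀ (ω : Ω₀) (κ : Ω),
      (∑ i ∈ β κ, if i ∈ s ω then W ω i κ / π i else 0) = g κ ω := by
    intro ω κ
    rw [← Finset.sum_filter]
    have hfe : (β κ).filter (fun i => i ∈ s ω) = s ω ∩ β κ := by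
      ext i; simp [hβ, and_comm]
    rw [hfe]
    simp only [hg]
    split_ifs with h
    · exact hHT κ ω h
    · rw [Finset.not_nonempty_iff_eq_empty.mp h, Finset.sum_empty]
  have hg1 : ∀ κ, (∑ ω, P ω * g κ ω) = 1 := by
    intro κ
    have h1 : ∀ ω, P ω * g κ ω =
        (if (s ω ∩ β κ).Nonempty then P ω else 0) * (1 / πκ κ) := by
      intro ω; simp only [hg]; split_ifs <;> ring
    rw [Finset.sum_congr rfl fun ω _ => h1 ω, ← Finset.sum_mul, ← hπκ κ,
      mul_one_div]
    exact div_self (hπκne κ)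
  have hg2 : ∀ κ ℓ, (∑ ω, P ω * (g κ ω * g ℓ ω)) = πκℓ κ ℓ / (πκ κ * πκ ℓ) := by
    intro κ ℓ
    have h1 : ∀ ω, P ω * (g κ ω * g ℓ ω) =
        (if (s ω ∩ β κ).Nonempty ∧ (s ω ∩ β ℓ).Nonempty then P ω else 0)
          * (1 / (πκ κ * πκ ℓ)) := by
      intro ω; simp only [hg]
      rcases Classical.em ((s ω ∩ β κ).Nonempty) with hA | hA
      · rcases Classical.em ((s ω ∩ β ℓ).Nonempty) with hB | hB
        · rw [if_pos hA, if_pos hB, if_pos ⟨hA, hB⟩, one_div_mul_one_div]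
        · rw [if_neg hB,
            if_neg (fun h : (s ω ∩ β κ).Nonempty ∧ (s ω ∩ β ℓ).Nonempty => hB h.2)]
          simp
      · rw [if_neg hA,
            if_neg (fun h : (s ω ∩ β κ).Nonempty ∧ (s ω ∩ β ℓ).Nonempty => hA h.1)]
        simp
    rw [Finset.sum_congr rfl fun ω _ => h1 ω, ← Finset.sum_mul, ← hπκℓ κ ℓ,
      mul_one_div]
  constructor
  · intro κ ℓ
    have hterm : ∀ i j, πij i j / (π i * π j) *
        ((∑ ω, if i ∈ s ω ∧ j ∈ s ω then P ω * W ω i κ * W ω j ℓ else 0) / πij i j)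
        = ∑ ω, P ω * ((if i ∈ s ω then W ω i κ / π i else 0) *
                      (if j ∈ s ω then W ω j ℓ / π j else 0)) := by
      intro i j
      have h0 : πij i j ≠ 0 := ne_of_gt (hπijpos i j)
      have hterm2 : ∀ ω : Ω₀, (if i ∈ s ω ∧ j ∈ s ω then P ω * W ω i κ * W ω j ℓ else 0)
          / (π i * π j)
          = P ω * ((if i ∈ s ω then W ω i κ / π i else 0) *
                   (if j ∈ s ω then W ω j ℓ / π j else 0)) := by
        intro ω
        rcases Classical.em (i ∈ s ω) with hA | hA
        · rcases Classical.em (j ∈ s ω) with hB | hB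
          · rw [if_pos ⟨hA, hB⟩, if_pos hA, if_pos hB]; field_simp
          · rw [if_neg (fun h : i ∈ s ω ∧ j ∈ s ω => hB h.2), if_neg hB]; simp
        · rw [if_neg (fun h : i ∈ s ω ∧ j ∈ s ω => hA h.1), if_neg hA]; simp
      calc πij i j / (π i * π j) *
          ((∑ ω, if i ∈ s ω ∧ j ∈ s ω then P ω * W ω i κ * W ω j ℓ else 0) / πij i j)
          = (∑ ω, if i ∈ s ω ∧ j ∈ s ω then P ω * W ω i κ * W ω j ℓ else 0)
              / (π i * π j) := by
            rw [div_mul_div_comm, mul_comm (π i * π j) (πij i j),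
              mul_div_mul_left _ _ h0]
        _ = ∑ ω, (if i ∈ s ω ∧ j ∈ s ω then P ω * W ω i κ * W ω j ℓ else 0)
              / (π i * π j) := by rw [Finset.sum_div]
        _ = _ := Finset.sum_congr rfl fun ω _ => hterm2 ω
    calc ∑ i ∈ β κ, ∑ j ∈ β ℓ,
          πij i j / (π i * π j) *
            ((∑ ω, if i ∈ s ω ∧ j ∈ s ω then P ω * W ω i κ * W ω j ℓ else 0)
              / πij i j)
        = ∑ i ∈ β κ, ∑ j ∈ β ℓ, ∑ ω,
            P ω * ((if i ∈ s ω then W ω i κ / π i else 0) *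
                   (if j ∈ s ω then W ω j ℓ / π j else 0)) :=
          Finset.sum_congr rfl fun i _ => Finset.sum_congr rfl fun j _ => hterm i j
      _ = ∑ i ∈ β κ, ∑ ω, ∑ j ∈ β ℓ,
            P ω * ((if i ∈ s ω then W ω i κ / π i else 0) *
                   (if j ∈ s ω then W ω j ℓ / π j else 0)) :=
          Finset.sum_congr rfl fun i _ => Finset.sum_comm
      _ = ∑ ω, ∑ i ∈ β κ, ∑ j ∈ β ℓ,
            P ω * ((if i ∈ s ω then W ω i κ / π i else 0) *
                   (if j ∈ s ω then W ω j ℓ / π j else 0)) := Finset.sum_comm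
      _ = ∑ ω, P ω * (g κ ω * g ℓ ω) := by
          refine Finset.sum_congr rfl fun ω _ => ?_
          rw [← key ω κ, ← key ω ℓ, Finset.sum_mul_sum, Finset.mul_sum]
          exact Finset.sum_congr rfl fun i _ => by rw [Finset.mul_sum]
      _ = πκℓ κ ℓ / (πκ κ * πκ ℓ) := hg2 κ ℓ
  · have hT : ∀ ω, (∑ e ∈ H, (if e.1 ∈ s ω then (1 : ℝ) else 0) * W ω e.1 e.2 * y e.2 / π e.1)
        = ∑ κ, g κ ω * y κ := by
      intro ω
      have h1 : (∑ e ∈ H, (if e.1 ∈ s ω then (1 : ℝ) else 0) * W ω e.1 e.2 * y e.2 / π e.1)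
          = ∑ e : F × Ω, if e ∈ H then
              (if e.1 ∈ s ω then (1 : ℝ) else 0) * W ω e.1 e.2 * y e.2 / π e.1 else 0 := by
        rw [Finset.sum_ite_mem, Finset.univ_inter]
      rw [h1, Fintype.sum_prod_type, Finset.sum_comm]
      refine Finset.sum_congr rfl fun κ _ => ?_
      have h2 : (∑ i : F, if (i, κ) ∈ H then
            (if i ∈ s ω then (1 : ℝ) else 0) * W ω i κ * y κ / π i else 0)
          = ∑ i ∈ β κ, (if i ∈ s ω then W ω i κ / π i else 0) * y κ := by
        rw [hβ, Finset.sum_filter]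
        refine Finset.sum_congr rfl fun i _ => ?_
        split_ifs <;> ring
      rw [h2, ← Finset.sum_mul, key]
    have hsum : ∀ ω, ((∑ κ, g κ ω * y κ) - ∑ κ, y κ) = ∑ κ, (g κ ω - 1) * y κ := by
      intro ω
      rw [← Finset.sum_sub_distrib]
      exact Finset.sum_congr rfl fun κ _ => by ring
    calc ∑ ω, P ω *
          ((∑ e ∈ H, (if e.1 ∈ s ω then (1 : ℝ) else 0) * W ω e.1 e.2 * y e.2 / π e.1)
            - ∑ κ, y κ) ^ 2
        = ∑ ω, ∑ κ, ∑ ℓ, P ω * ((g κ ω - 1) * y κ * ((g ℓ ω - 1) * y ℓ)) := by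
          refine Finset.sum_congr rfl fun ω _ => ?_
          rw [hT, hsum, sq, Finset.sum_mul_sum, Finset.mul_sum]
          exact Finset.sum_congr rfl fun κ _ => by rw [Finset.mul_sum]
      _ = ∑ κ, ∑ ω, ∑ ℓ, P ω * ((g κ ω - 1) * y κ * ((g ℓ ω - 1) * y ℓ)) :=
          Finset.sum_comm
      _ = ∑ κ, ∑ ℓ, ∑ ω, P ω * ((g κ ω - 1) * y κ * ((g ℓ ω - 1) * y ℓ)) :=
          Finset.sum_congr rfl fun κ _ => Finset.sum_comm
      _ = ∑ κ, ∑ ℓ, (πκℓ κ ℓ / (πκ κ * πκ ℓ) - 1) * y κ * y ℓ := by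
          refine Finset.sum_congr rfl fun κ _ => Finset.sum_congr rfl fun ℓ _ => ?_
          calc ∑ ω, P ω * ((g κ ω - 1) * y κ * ((g ℓ ω - 1) * y ℓ))
              = (∑ ω, (P ω * (g κ ω * g ℓ ω) - P ω * g κ ω - P ω * g ℓ ω + P ω))
                  * (y κ * y ℓ) := by
                rw [Finset.sum_mul]
                exact Finset.sum_congr rfl fun ω _ => by ring
            _ = (πκℓ κ ℓ / (πκ κ * πκ ℓ) - 1 - 1 + 1) * (y κ * y ℓ) := by
                rw [Finset.sum_add_distrib, Finset.sum_sub_distrib,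
                  Finset.sum_sub_distrib, hg2, hg1, hg1, hP1]
            _ = (πκℓ κ ℓ / (πκ κ * πκ ℓ) - 1) * y κ * y ℓ := by ring
end
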